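/- arXiv:1201.4093 — 3 statements merged into one kernel-verified Lean document; each statement's English description precedes it below -/
import Mathlib

section
/- The sum over all connected simple graphs G on the labeled vertex set {1,...,n} (n ≥ 1) of (-1)^{e(G)} equals (-1)^{n-1} * (n-1)!. -/
/-!
Write `c n` for the signed count of connected graphs on `n` labelled vertices. Classifying all
graphs on `V` by the set `T` of vertices not reachable from a fixed `v` splits each of them into a
connected graph on `Tᶜ` and an arbitrary graph on `T`, so
`∑_G (-1)^e(G) = ∑_{T ∌ v} c (|V| - |T|) * ∑_{K on T} (-1)^e(K)`.
An alternating sum over all graphs is an alternating sum over the subsets of the edge set of the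
complete graph, hence vanishes unless there is at most one vertex. For `|V| = m + 2` only
`T = ∅` and the `m + 1` singletons survive, giving `c (m + 2) + (m + 1) c (m + 1) = 0`.
-/

open Finset
open scoped Nat

namespace SimpleGraph

variable {V : Type*}

def sumCompl (s : Set V) [DecidablePred (· ∈ s)] (G : SimpleGraph s) (H : SimpleGraph ↥sᶜ) :
    SimpleGraph V :=
  (G ⊕g H).comap (Equiv.Set.sumCompl s).symm

variable {s : Set V} [DecidablePred (· ∈ s)] {G : SimpleGraph s} {H : SimpleGraph ↥sᶜ}

lemma sumCompl_induce {K : SimpleGraph V} (hK : ∀ a b, K.Adj a b → (a ∈ s ↔ b ∈ s)) :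
    sumCompl s (K.induce s) (K.induce sᶜ) = K := by
  ext a b
  by_cases ha : a ∈ s <;> by_cases hb : b ∈ s <;>
    simp [sumCompl, Equiv.Set.sumCompl_symm_apply_of_mem,
      Equiv.Set.sumCompl_symm_apply_of_notMem, ha, hb]
  all_goals exact fun hab => by simp_all [hK a b hab]

lemma connectedComponentMk_supp_sumCompl (hH : H.Connected) {v : V} (hv : v ∉ s) :
    ((sumCompl s G H).connectedComponentMk v).supp = sᶜ := by
  ext x
  rw [ConnectedComponent.mem_supp_iff, ConnectedComponent.eq, sumCompl,
    ← (Iso.comap _ (G ⊕g H)).reachable_iff]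
  by_cases hx : x ∈ s
  · simpa [Equiv.Set.sumCompl_symm_apply_of_mem hx, Equiv.Set.sumCompl_symm_apply_of_notMem hv,
      hx] using not_reachable_sum_inl_inr _ _
  · simpa [Equiv.Set.sumCompl_symm_apply_of_notMem hx, Equiv.Set.sumCompl_symm_apply_of_notMem hv,
      hx] using (hH.preconnected _ _).map Embedding.sumInr.toHom

lemma induce_sumCompl_left : (sumCompl s G H).induce s = G := by
  ext a b
  simp [sumCompl]

lemma induce_sumCompl_right : (sumCompl s G H).induce sᶜ = H := by
  ext a b
  simp [sumCompl]

lemma card_edgeSet_sumCompl [Finite V] :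
    Nat.card (sumCompl s G H).edgeSet = Nat.card G.edgeSet + Nat.card H.edgeSet := by
  rw [← Nat.card_sum, sumCompl,
    Nat.card_congr ((Iso.comap _ _).mapEdgeSet.trans (edgeSetSumEquiv (G := G) (H := H)))]

def componentComplEquiv (v : V) {t : Set V} [DecidablePred (· ∈ t)] (hv : v ∉ t) :
    {K : SimpleGraph V // (K.connectedComponentMk v).suppᶜ = t} ≃
      SimpleGraph t × {H : SimpleGraph ↥tᶜ // H.Connected} where
  toFun K := (K.1.induce t, ⟨K.1.induce tᶜ, by
    obtain ⟨K, rfl⟩ := K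
    rw [compl_compl]
    exact ConnectedComponent.connected_toSimpleGraph _⟩)
  invFun p := ⟨sumCompl t p.1 p.2.1, by
    rw [connectedComponentMk_supp_sumCompl p.2.2 hv, compl_compl]⟩
  left_inv K := Subtype.ext <| sumCompl_induce fun a b hab => by
    rw [← K.2]; exact not_congr (ConnectedComponent.mem_supp_congr_adj _ hab)
  right_inv p := Prod.ext induce_sumCompl_left (Subtype.ext induce_sumCompl_right)

end SimpleGraph

open SimpleGraph

section Counting

open scoped Classical

variable {V : Type*} [Fintype V] [DecidableEq V]

lemma sum_neg_one_pow_card_edgeSet :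
    ∑ G : SimpleGraph V, (-1 : ℤ) ^ Nat.card G.edgeSet =
      if Fintype.card V ≤ 1 then 1 else 0 := by
  have hsubsets : ∑ G : SimpleGraph V, (-1 : ℤ) ^ Nat.card G.edgeSet =
      ∑ t ∈ (⊤ : SimpleGraph V).edgeFinset.powerset, (-1) ^ #t := by
    refine sum_nbij' (fun G => G.edgeFinset) (fun t => fromEdgeSet ↑t)
      (fun G _ => mem_powerset.2 (edgeFinset_mono le_top)) (fun _ _ => mem_univ _)
      (fun G _ => by simp) (fun t ht => ?_)
      (fun G _ => by rw [Nat.card_eq_fintype_card, edgeFinset_card])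
    have ht' : Disjoint (t : Set (Sym2 V)) Sym2.diagSet := by
      rw [← Set.subset_compl_iff_disjoint_right, ← edgeSet_top, ← coe_edgeFinset, coe_subset]
      exact mem_powerset.1 ht
    rw [← coe_inj, coe_edgeFinset, edgeSet_fromEdgeSet, sdiff_eq_left.2 ht']
  rw [hsubsets, sum_powerset_neg_one_pow_card]
  simp only [edgeFinset_eq_empty, eq_comm (a := ⊤), subsingleton_iff_bot_eq_top,
    SimpleGraph.subsingleton_iff, Fintype.card_le_one_iff_subsingleton]

noncomputable def connectedSignSum (V : Type*) [Fintype V] [DecidableEq V] : ℤ :=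
  ∑ G ∈ univ.filter (fun G : SimpleGraph V => G.Connected), (-1 : ℤ) ^ Nat.card G.edgeSet

lemma connectedSignSum_congr {W : Type*} [Fintype W] [DecidableEq W] (e : V ≃ W) :
    connectedSignSum V = connectedSignSum W := by
  rw [connectedSignSum, connectedSignSum, sum_filter, sum_filter]
  refine Fintype.sum_equiv e.simpleGraph _ _ fun G => ?_
  simp only [Equiv.simpleGraph_apply, (Iso.comap e.symm G).connected_iff,
    Nat.card_congr (Iso.comap e.symm G).mapEdgeSet]

lemma connectedSignSum_eq_sum_subtype : connectedSignSum V =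
    ∑ G : {G : SimpleGraph V // G.Connected}, (-1 : ℤ) ^ Nat.card G.1.edgeSet :=
  sum_subtype _ (by simp) _

lemma sum_filter_connectedComponentMk_supp_compl (v : V) {T : Finset V} (hv : v ∉ T) :
    ∑ G ∈ univ.filter fun G : SimpleGraph V => (G.connectedComponentMk v).supp.toFinsetᶜ = T,
        (-1 : ℤ) ^ Nat.card G.edgeSet =
      (∑ K : SimpleGraph (T : Set V), (-1 : ℤ) ^ Nat.card K.edgeSet) *
        connectedSignSum ↥(T : Set V)ᶜ := by
  rw [connectedSignSum_eq_sum_subtype, sum_mul_sum,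
    sum_subtype _ (p := fun G : SimpleGraph V => (G.connectedComponentMk v).suppᶜ = T)
      fun G => by simp [← coe_inj],
    ← (componentComplEquiv v hv).symm.sum_comp, Fintype.sum_prod_type]
  simp only [componentComplEquiv, Equiv.coe_fn_symm_mk, card_edgeSet_sumCompl, pow_add]

lemma connectedSignSum_eq_fin : connectedSignSum V = connectedSignSum (Fin (Fintype.card V)) :=
  connectedSignSum_congr (Fintype.equivFin V)

lemma sum_neg_one_pow_card_edgeSet_eq_sum_powerset (v : V) :
    ∑ G : SimpleGraph V, (-1 : ℤ) ^ Nat.card G.edgeSet =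
      ∑ T ∈ (univ.erase v).powerset,
        (if #T ≤ 1 then 1 else 0) * connectedSignSum (Fin (Fintype.card V - #T)) := by
  have hmaps : ∀ G ∈ (univ : Finset (SimpleGraph V)),
      (G.connectedComponentMk v).supp.toFinsetᶜ ∈ (univ.erase v).powerset :=
    fun G _ => by simp [subset_erase]
  rw [← sum_fiberwise_of_maps_to hmaps]
  refine sum_congr rfl fun T hT => ?_
  have hv : v ∉ T := fun hv => by simpa using mem_powerset.1 hT hv
  have hcard : Fintype.card ↥(T : Set V)ᶜ = Fintype.card V - #T := by
    rw [Fintype.card_eq_nat_card, Nat.card_coe_set_eq, ← coe_compl, Set.ncard_coe_finset,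
      card_compl]
  rw [sum_filter_connectedComponentMk_supp_compl v hv, sum_neg_one_pow_card_edgeSet,
    connectedSignSum_eq_fin, hcard]
  simp only [coe_sort_coe, Fintype.card_coe]

lemma connectedSignSum_fin_add_two (m : ℕ) :
    connectedSignSum (Fin (m + 2)) = -(m + 1) * connectedSignSum (Fin (m + 1)) := by
  have h := sum_neg_one_pow_card_edgeSet_eq_sum_powerset (0 : Fin (m + 2))
  rw [Fintype.card_fin, sum_powerset_apply_card
    (fun k => (if k ≤ 1 then 1 else 0) * connectedSignSum (Fin (m + 2 - k))),
    sum_neg_one_pow_card_edgeSet] at h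
  have h' : (0 : ℤ) =
      (m + 1) * connectedSignSum (Fin (m + 1)) + connectedSignSum (Fin (m + 2)) := by
    simpa [sum_range_succ'] using h
  linarith

lemma connectedSignSum_fin_one : connectedSignSum (Fin 1) = 1 := by
  rw [connectedSignSum, filter_true_of_mem fun G _ => ⟨.of_subsingleton⟩,
    sum_neg_one_pow_card_edgeSet, if_pos (by simp)]

lemma connectedSignSum_fin_succ (m : ℕ) : connectedSignSum (Fin (m + 1)) = (-1) ^ m * m ! := by
  induction m with
  | zero => simp [connectedSignSum_fin_one]
  | succ m ih =>
    rw [connectedSignSum_fin_add_two, ih, Nat.factorial_succ]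
    push_cast
    ring

end Counting

open scoped Classical in
/-- The sum of `(-1)^{e(G)}` over all connected simple graphs `G` on `n ≥ 1` labeled vertices
equals `(-1)^{n-1} (n-1)!`. -/
theorem sum_connected_graphs_neg_one_pow_edges (n : ℕ) (hn : 1 ≤ n) :
    ∑ G ∈ Finset.univ.filter (fun G : SimpleGraph (Fin n) => G.Connected),
        ((-1 : ℤ)) ^ (Nat.card G.edgeSet) =
      (-1 : ℤ) ^ (n - 1) * (Nat.factorial (n - 1)) := by
  obtain ⟨m, rfl⟩ := Nat.exists_eq_add_of_le' hn
  rw [Nat.add_sub_cancel, ← connectedSignSum_fin_succ]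
  rfl
end

section
/- For each fixed m ≥ 1, the generating function sum over n ≥ 0 of f_m(n) q^n equals the sum over all set partitions C = {C_1,...,C_r} of {1,...,m} of the product over blocks C_j of poids(C_j), where poids({s}) = 1/(1-q^s) and for a block of size d > 1 with elements s_1,...,s_d, poids = (-1)^{d-1} (d-1)! q^{s_1+...+s_d}/(1 - q^{s_1+...+s_d}). -/
open scoped Classical

/-- A partition has pairwise distinct (nonzero) multiplicities. -/
def distinctMult {n : ℕ} (P : n.Partition) : Prop :=
  ∀ i ∈ P.parts, ∀ j ∈ P.parts, i ≠ j → P.parts.count i ≠ P.parts.count j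

/-- `fm m n` : the number of partitions of `n` with all parts at most `m` and all nonzero
multiplicities pairwise distinct. -/
noncomputable def fm (m n : ℕ) : ℕ :=
  Nat.card {P : n.Partition // (∀ x ∈ P.parts, x ≤ m) ∧ distinctMult P}

/-- `C` is a set partition of `{1,…,m}` (encoded as `Fin m`, with `i : Fin m`
standing for the part `i+1`). -/
def IsSetPartition (m : ℕ) (C : Finset (Finset (Fin m))) : Prop :=
  (∀ B ∈ C, B.Nonempty) ∧
  (∀ B₁ ∈ C, ∀ B₂ ∈ C, B₁ ≠ B₂ → Disjoint B₁ B₂) ∧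
  (∀ x : Fin m, ∃ B ∈ C, x ∈ B)

/-- The weight `poids` of a block `B ⊆ {1,…,m}`:
`1/(1-q^s)` for a singleton `{s}` and
`(-1)^{d-1}(d-1)! q^{s₁+⋯+s_d}/(1-q^{s₁+⋯+s_d})` for a block of size `d > 1`. -/
noncomputable def poids {m : ℕ} (B : Finset (Fin m)) : PowerSeries ℚ :=
  if B.card = 1 then
    (1 - PowerSeries.X ^ (∑ s ∈ B, ((s : ℕ) + 1)))⁻¹
  else
    ((-1 : ℚ) ^ (B.card - 1) * (Nat.factorial (B.card - 1) : ℚ)) •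
      (PowerSeries.X ^ (∑ s ∈ B, ((s : ℕ) + 1)) *
        (1 - PowerSeries.X ^ (∑ s ∈ B, ((s : ℕ) + 1)))⁻¹)

/-!
Write `a i` for the multiplicity of the part `i + 1` in a partition. Expanding each `poids B` in
powers of `q ^ (∑ B)`, the coefficient of `q ^ n` in `∏_{B ∈ C} poids B` is a sum over the
multiplicity vectors `a` of weight `n` that are constant on every block of `C` and nonzero on the
blocks of size `> 1`, each counted with `∏_B (-1)^(|B|-1) (|B|-1)!`. After exchanging the two sums
it remains to see that, for fixed `a`, the sum over set partitions is `1` if the nonzero values of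
`a` are pairwise distinct and `0` otherwise (on each level set `L` of `a` this is the identity
`∑_π μ(0̂, π) = [|L| ≤ 1]` of the partition lattice). Splitting off the block of a fixed `x` with
`a x ≠ 0`, only blocks inside the level set `L` of `a x` contribute, and by induction only those
missing at most one element of `L`; as `(-1)^k k! + k (-1)^(k-1) (k-1)! = 0`, they cancel unless
`L = {x}`.
-/

open Finset PowerSeries

section SetPartition

variable {α : Type*}

structure IsSetPartitionOf (K : Finset α) (C : Finset (Finset α)) : Prop where
  nonempty : ∀ B ∈ C, B.Nonempty
  subset : ∀ B ∈ C, B ⊆ K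
  disjoint : ∀ B₁ ∈ C, ∀ B₂ ∈ C, B₁ ≠ B₂ → Disjoint B₁ B₂
  cover : ∀ x ∈ K, ∃ B ∈ C, x ∈ B

theorem isSetPartitionOf_empty_iff {C : Finset (Finset α)} :
    IsSetPartitionOf ∅ C ↔ C = ∅ := by
  refine ⟨fun h => eq_empty_of_forall_notMem fun B hB => ?_, fun h => ⟨?_, ?_, ?_, ?_⟩⟩
  · obtain ⟨y, hy⟩ := h.nonempty B hB
    exact notMem_empty y (h.subset B hB hy)
  all_goals simp [h]

namespace IsSetPartitionOf

variable {K B : Finset α} {C : Finset (Finset α)}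

theorem eq_of_mem (h : IsSetPartitionOf K C) {B₁ B₂ : Finset α} (hB₁ : B₁ ∈ C) (hB₂ : B₂ ∈ C)
    {x : α} (hx₁ : x ∈ B₁) (hx₂ : x ∈ B₂) : B₁ = B₂ := by
  by_contra hne
  exact disjoint_left.1 (h.disjoint B₁ hB₁ B₂ hB₂ hne) hx₁ hx₂

theorem exists_forall_mem_eq {β : Type*} (h : IsSetPartitionOf K C) (g : Finset α → β) :
    ∃ f : α → β, ∀ B ∈ C, ∀ y ∈ B, f y = g B := by
  classical
  refine ⟨fun y => if hy : ∃ B ∈ C, y ∈ B then g hy.choose else g ∅, fun B hB y hy => ?_⟩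
  have hex : ∃ B ∈ C, y ∈ B := ⟨B, hB, hy⟩
  dsimp only
  rw [dif_pos hex, h.eq_of_mem hex.choose_spec.1 hB hex.choose_spec.2 hy]

variable [DecidableEq α]

theorem sum_eq_sum_sum {M : Type*} [AddCommMonoid M] (h : IsSetPartitionOf K C) (f : α → M) :
    ∑ x ∈ K, f x = ∑ B ∈ C, ∑ x ∈ B, f x := by
  have hK : C.biUnion id = K := by
    ext x
    simp only [mem_biUnion, id]
    exact ⟨fun ⟨B, hB, hx⟩ => h.subset B hB hx, h.cover x⟩
  rw [← hK, sum_biUnion (t := id) fun B₁ hB₁ B₂ hB₂ => h.disjoint B₁ hB₁ B₂ hB₂]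
  rfl

theorem erase (h : IsSetPartitionOf K C) (hB : B ∈ C) : IsSetPartitionOf (K \ B) (C.erase B) where
  nonempty B' hB' := h.nonempty B' (mem_of_mem_erase hB')
  subset B' hB' y hy := mem_sdiff.2 ⟨h.subset B' (mem_of_mem_erase hB') hy,
    fun hyB => ne_of_mem_erase hB' (h.eq_of_mem (mem_of_mem_erase hB') hB hy hyB)⟩
  disjoint B₁ hB₁ B₂ hB₂ := h.disjoint B₁ (mem_of_mem_erase hB₁) B₂ (mem_of_mem_erase hB₂)
  cover y hy := by
    obtain ⟨B', hB', hyB'⟩ := h.cover y (mem_sdiff.1 hy).1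
    exact ⟨B', mem_erase.2 ⟨fun h => (mem_sdiff.1 hy).2 (h ▸ hyB'), hB'⟩, hyB'⟩

theorem notMem_of_sdiff (h : IsSetPartitionOf (K \ B) C) (hB : B.Nonempty) : B ∉ C := by
  intro hBC
  obtain ⟨y, hy⟩ := hB
  exact (mem_sdiff.1 (h.subset B hBC hy)).2 hy

theorem insert (h : IsSetPartitionOf (K \ B) C) (hBK : B ⊆ K) (hB : B.Nonempty) :
    IsSetPartitionOf K (insert B C) := by
  have hdisj : ∀ B' ∈ C, Disjoint B B' := fun B' hB' =>
    disjoint_left.2 fun y hyB hyB' => (mem_sdiff.1 (h.subset B' hB' hyB')).2 hyB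
  refine ⟨?_, ?_, ?_, ?_⟩
  · simpa [hB] using h.nonempty
  · simpa [hBK] using fun B' hB' => (h.subset B' hB').trans sdiff_subset
  · simp only [mem_insert]
    rintro B₁ (rfl | hB₁) B₂ (rfl | hB₂) hne
    exacts [absurd rfl hne, hdisj B₂ hB₂, (hdisj B₁ hB₁).symm, h.disjoint B₁ hB₁ B₂ hB₂ hne]
  · intro y hy
    by_cases hyB : y ∈ B
    · exact ⟨B, mem_insert_self B C, hyB⟩
    · obtain ⟨B', hB', hyB'⟩ := h.cover y (mem_sdiff.2 ⟨hy, hyB⟩)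
      exact ⟨B', mem_insert_of_mem hB', hyB'⟩

end IsSetPartitionOf

variable [DecidableEq α] [Fintype α]

theorem sum_setPartitions_eq_sum_block {R : Type*} [CommSemiring R] (W : Finset α → R)
    {K : Finset α} {x : α} (hx : x ∈ K) :
    ∑ C ∈ univ.filter (IsSetPartitionOf K), ∏ B ∈ C, W B =
      ∑ B ∈ K.powerset.filter (x ∈ ·),
        W B * ∑ C ∈ univ.filter (IsSetPartitionOf (K \ B)), ∏ B' ∈ C, W B' := by
  simp only [mul_sum]
  rw [sum_sigma']
  symm
  refine sum_bij (fun p _ => insert p.1 p.2) ?_ ?_ ?_ ?_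
  · rintro ⟨B, C⟩ hp
    simp only [mem_sigma, mem_filter, mem_powerset, mem_univ, true_and] at hp ⊢
    exact hp.2.insert hp.1.1 ⟨x, hp.1.2⟩
  · rintro ⟨B₁, C₁⟩ hp₁ ⟨B₂, C₂⟩ hp₂ heq
    simp only [mem_sigma, mem_filter, mem_powerset, mem_univ, true_and] at hp₁ hp₂ heq
    have hB : B₁ = B₂ := (hp₁.2.insert hp₁.1.1 ⟨x, hp₁.1.2⟩).eq_of_mem (mem_insert_self _ _)
      (heq ▸ mem_insert_self _ _) hp₁.1.2 hp₂.1.2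
    subst hB
    have hC : C₁ = C₂ := by
      rw [← erase_insert (hp₁.2.notMem_of_sdiff ⟨x, hp₁.1.2⟩), heq,
        erase_insert (hp₂.2.notMem_of_sdiff ⟨x, hp₂.1.2⟩)]
    rw [hC]
  · intro C hC
    simp only [mem_filter, mem_univ, true_and] at hC
    obtain ⟨B, hB, hxB⟩ := hC.cover x hx
    refine ⟨⟨B, C.erase B⟩, ?_, insert_erase hB⟩
    simp only [mem_sigma, mem_filter, mem_powerset, mem_univ, true_and]
    exact ⟨⟨hC.subset B hB, hxB⟩, hC.erase hB⟩
  · rintro ⟨B, C⟩ hp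
    simp only [mem_sigma, mem_filter, mem_powerset, mem_univ, true_and] at hp
    exact (prod_insert (hp.2.notMem_of_sdiff ⟨x, hp.1.2⟩)).symm

end SetPartition

open Nat in
def signedFactorial (d : ℕ) : ℚ := (-1) ^ (d - 1) * (d - 1)!

theorem signedFactorial_one : signedFactorial 1 = 1 := by simp [signedFactorial]

theorem signedFactorial_add_two (k : ℕ) :
    signedFactorial (k + 2) + (k + 1) * signedFactorial (k + 1) = 0 := by
  rw [signedFactorial, signedFactorial, show k + 2 - 1 = k + 1 by omega, Nat.add_sub_cancel,
    Nat.factorial_succ, pow_succ]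
  push_cast
  ring

theorem sum_signedFactorial_of_card_sdiff_le_one {α : Type*} [DecidableEq α] {L : Finset α}
    {x : α} (hx : x ∈ L) :
    ∑ B ∈ L.powerset.filter (x ∈ ·), (if (L \ B).card ≤ 1 then signedFactorial B.card else 0) =
      if L.card ≤ 1 then 1 else 0 := by
  rw [← insert_erase hx]
  set L' := L.erase x
  have hx' : x ∉ L' := notMem_erase x L
  have hterm : ∀ t ∈ L'.powerset, (if (insert x L' \ insert x t).card ≤ 1 then
      signedFactorial (insert x t).card else 0) =
      if L'.card - t.card ≤ 1 then signedFactorial (t.card + 1) else 0 := by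
    intro t ht
    rw [mem_powerset] at ht
    rw [insert_sdiff_insert, sdiff_insert_of_notMem hx', card_sdiff_of_subset ht,
      card_insert_of_notMem fun h => hx' (ht h)]
  rw [sum_filter, sum_powerset_insert hx', sum_eq_zero fun t ht =>
      if_neg fun h => hx' (mem_powerset.1 ht h), zero_add]
  simp only [mem_insert_self, if_true]
  rw [sum_congr rfl hterm, sum_powerset_apply_card
    (fun j => if L'.card - j ≤ 1 then signedFactorial (j + 1) else 0), card_insert_of_notMem hx']
  rcases L'.card with _ | k
  · simp [signedFactorial_one]
  · rw [sum_range_succ, sum_range_succ, sum_eq_zero fun j hj => ?_]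
    · simp only [Nat.choose_self, Nat.choose_succ_self_right, add_tsub_cancel_left, le_refl,
        if_true, Nat.sub_self, zero_le, one_smul, nsmul_eq_mul, Nat.cast_add, Nat.cast_one,
        zero_add, show ¬ k + 1 + 1 ≤ 1 by omega, if_false]
      rw [add_comm]
      exact signedFactorial_add_two k
    · rw [if_neg (by rw [mem_range] at hj; omega), smul_zero]

section BlockCoeff

variable {α : Type*}

/-- The coefficient of `q ^ (∑_{y ∈ B} (y + 1) * a y)` in `poids B` when `a` is constant on `B`
(see `blockCoeff_eq_coeff_poids`); it vanishes when `a` is not. -/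
noncomputable def blockCoeff (a : α → ℕ) (B : Finset α) : ℚ :=
  if B.card = 1 ∨ ∃ v ≠ 0, ∀ y ∈ B, a y = v then signedFactorial B.card else 0

theorem blockCoeff_singleton (a : α → ℕ) (x : α) : blockCoeff a {x} = 1 := by
  simp [blockCoeff, signedFactorial_one]

theorem blockCoeff_of_forall_eq {a : α → ℕ} {B : Finset α} {x : α} (hax : a x ≠ 0)
    (hB : ∀ y ∈ B, a y = a x) : blockCoeff a B = signedFactorial B.card :=
  if_pos (Or.inr ⟨a x, hax, hB⟩)

theorem blockCoeff_eq_zero_of_eq_zero {a : α → ℕ} {B : Finset α} {x : α} (hx : x ∈ B)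
    (hax : a x = 0) (hB : B.card ≠ 1) : blockCoeff a B = 0 := by
  refine if_neg ?_
  rintro (h | ⟨v, hv, hB'⟩)
  exacts [hB h, hv (hB' x hx ▸ hax)]

theorem blockCoeff_eq_zero_of_ne {a : α → ℕ} {B : Finset α} {x y : α} (hx : x ∈ B) (hy : y ∈ B)
    (hxy : a y ≠ a x) : blockCoeff a B = 0 := by
  refine if_neg ?_
  rintro (h | ⟨v, -, hB⟩)
  · exact hxy (congrArg a (card_le_one.1 h.le y hy x hx))
  · exact hxy ((hB y hy).trans (hB x hx).symm)

def DistinctNonzeroOn (a : α → ℕ) (K : Finset α) : Prop :=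
  ∀ y ∈ K, ∀ z ∈ K, y ≠ z → a y ≠ 0 → a y ≠ a z

theorem DistinctNonzeroOn.mono {a : α → ℕ} {K K' : Finset α} (h : DistinctNonzeroOn a K)
    (hK : K' ⊆ K) : DistinctNonzeroOn a K' :=
  fun y hy z hz => h y (hK hy) z (hK hz)

variable [DecidableEq α]

theorem distinctNonzeroOn_sdiff_singleton_iff {a : α → ℕ} {K : Finset α} {x : α}
    (hax : a x = 0) : DistinctNonzeroOn a (K \ {x}) ↔ DistinctNonzeroOn a K := by
  refine ⟨fun h y hy z hz hne hay => ?_, fun h => h.mono sdiff_subset⟩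
  have hyx : y ≠ x := fun hyx => hay (hyx ▸ hax)
  by_cases hzx : z = x
  · rwa [hzx, hax]
  · exact h y (by simp [hy, hyx]) z (by simp [hz, hzx]) hne hay

theorem distinctNonzeroOn_sdiff_iff {a : α → ℕ} {K B : Finset α} {x : α} (hax : a x ≠ 0)
    (hB : B ⊆ K.filter (a · = a x)) :
    DistinctNonzeroOn a (K \ B) ↔
      DistinctNonzeroOn a (K.filter (a · ≠ a x)) ∧ (K.filter (a · = a x) \ B).card ≤ 1 := by
  constructor
  · intro h
    refine ⟨h.mono fun y hy => ?_, card_le_one.2 fun y hy z hz => ?_⟩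
    · simp only [mem_filter] at hy
      exact mem_sdiff.2 ⟨hy.1, fun hyB => hy.2 (mem_filter.1 (hB hyB)).2⟩
    · simp only [mem_sdiff, mem_filter] at hy hz
      by_contra hne
      exact h y (mem_sdiff.2 ⟨hy.1.1, hy.2⟩) z (mem_sdiff.2 ⟨hz.1.1, hz.2⟩) hne
        (hy.1.2 ▸ hax) (hy.1.2.trans hz.1.2.symm)
  · rintro ⟨h, hcard⟩ y hy z hz hne hay hyz
    rw [mem_sdiff] at hy hz
    by_cases hyx : a y = a x
    · exact hne (card_le_one.1 hcard y (by simp [hy, hyx]) z (by simp [hz, ← hyz, hyx]))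
    · exact h y (by simp [hy, hyx]) z (by simp [hz, ← hyz, hyx]) hne hay hyz

theorem sum_blockCoeff_mul_indicator (a : α → ℕ) {K : Finset α} {x : α} (hx : x ∈ K) :
    ∑ B ∈ K.powerset.filter (x ∈ ·),
        blockCoeff a B * (if DistinctNonzeroOn a (K \ B) then 1 else 0) =
      if DistinctNonzeroOn a K then 1 else 0 := by
  by_cases hax : a x = 0
  · rw [sum_eq_single_of_mem {x} (by simpa using hx), blockCoeff_singleton, one_mul,
      distinctNonzeroOn_sdiff_singleton_iff hax]
    intro B hB hne
    rw [mem_filter] at hB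
    rw [blockCoeff_eq_zero_of_eq_zero hB.2 hax fun h => hne ?_, zero_mul]
    exact eq_singleton_iff_unique_mem.2 ⟨hB.2, fun y hy => card_le_one.1 h.le y hy x hB.2⟩
  set L := K.filter (a · = a x)
  have hxL : x ∈ L := mem_filter.2 ⟨hx, rfl⟩
  have hsub : L.powerset.filter (x ∈ ·) ⊆ K.powerset.filter (x ∈ ·) :=
    filter_subset_filter _ (powerset_mono.2 (filter_subset _ K))
  rw [← sum_subset hsub fun B hB hBL => ?_]
  · have hterm : ∀ B ∈ L.powerset.filter (x ∈ ·),
        blockCoeff a B * (if DistinctNonzeroOn a (K \ B) then 1 else 0) =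
          (if DistinctNonzeroOn a (K.filter (a · ≠ a x)) then 1 else 0) *
            if (L \ B).card ≤ 1 then signedFactorial B.card else 0 := by
      intro B hB
      simp only [mem_filter, mem_powerset] at hB
      rw [blockCoeff_of_forall_eq hax fun y hy => (mem_filter.1 (hB.1 hy)).2,
        distinctNonzeroOn_sdiff_iff hax hB.1]
      split_ifs <;> simp_all [L]
    have hK := distinctNonzeroOn_sdiff_iff hax (empty_subset L)
    rw [sdiff_empty, sdiff_empty] at hK
    rw [sum_congr rfl hterm, ← mul_sum, sum_signedFactorial_of_card_sdiff_le_one hxL, hK]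
    split_ifs <;> simp_all [L]
  · simp only [mem_filter, mem_powerset, not_and] at hB hBL
    obtain ⟨y, hyB, hyL⟩ := not_subset.1 fun h => hBL h hB.2
    have hyx : a y ≠ a x := fun h => hyL (mem_filter.2 ⟨hB.1 hyB, h⟩)
    rw [blockCoeff_eq_zero_of_ne hB.2 hyB hyx, zero_mul]

theorem sum_setPartitions_prod_blockCoeff [Fintype α] (a : α → ℕ) (K : Finset α) :
    ∑ C ∈ univ.filter (IsSetPartitionOf K), ∏ B ∈ C, blockCoeff a B =
      if DistinctNonzeroOn a K then 1 else 0 := by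
  induction K using Finset.strongInduction with
  | H K ih =>
  obtain rfl | ⟨x, hx⟩ := K.eq_empty_or_nonempty
  · have : univ.filter (IsSetPartitionOf (∅ : Finset α)) = {∅} := by
      ext C
      simp [isSetPartitionOf_empty_iff]
    simp [this, DistinctNonzeroOn]
  rw [sum_setPartitions_eq_sum_block _ hx, ← sum_blockCoeff_mul_indicator a hx]
  refine sum_congr rfl fun B hB => ?_
  rw [mem_filter, mem_powerset] at hB
  rw [ih _ (sdiff_ssubset hB.1 ⟨x, hB.2⟩)]

end BlockCoeff

theorem coeff_inv_one_sub_X_pow {k : Type*} [Field k] {S : ℕ} (hS : 0 < S) (t : ℕ) :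
    coeff t ((1 - X ^ S : k⟦X⟧)⁻¹) = if S ∣ t then 1 else 0 := by
  suffices h : (1 - X ^ S : k⟦X⟧)⁻¹ = mk fun t => if S ∣ t then 1 else 0 by
    rw [h, coeff_mk]
  have hc : constantCoeff (1 - X ^ S : k⟦X⟧) ≠ 0 := by simp [hS.ne']
  rw [PowerSeries.inv_eq_iff_mul_eq_one hc]
  ext t
  rw [mul_sub, mul_one, map_sub, coeff_mul_X_pow', coeff_mk, coeff_one]
  rcases Nat.eq_zero_or_pos t with rfl | ht
  · simp [Nat.not_le.2 hS]
  · by_cases hSt : S ≤ t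
    · have : S ∣ t ∨ t ≤ S ↔ S ∣ t :=
        ⟨fun h => h.elim id fun h' => le_antisymm h' hSt ▸ dvd_rfl, Or.inl⟩
      simp [coeff_mk, ht.ne', Nat.dvd_sub_self_right, hSt, this]
    · have : ¬ S ∣ t := fun h => hSt (Nat.le_of_dvd ht h)
      simp [ht.ne', hSt, this]

section Coefficients

variable {m : ℕ}

def partSum (B : Finset (Fin m)) : ℕ := ∑ s ∈ B, ((s : ℕ) + 1)

theorem partSum_pos {B : Finset (Fin m)} (hB : B.Nonempty) : 0 < partSum B :=
  sum_pos (fun _ _ => Nat.succ_pos _) hB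

theorem coeff_poids {B : Finset (Fin m)} (hB : B.Nonempty) (t : ℕ) :
    coeff t (poids B) =
      if partSum B ∣ t ∧ (B.card = 1 ∨ t ≠ 0) then signedFactorial B.card else 0 := by
  have hS := partSum_pos hB
  have hpoids : poids B = if B.card = 1 then (1 - X ^ partSum B)⁻¹
      else signedFactorial B.card • (X ^ partSum B * (1 - X ^ partSum B)⁻¹) := rfl
  rw [hpoids]
  split_ifs with h1 h2 h2
  · rw [coeff_inv_one_sub_X_pow hS, if_pos h2.1, h1]; simp [signedFactorial]
  · rw [coeff_inv_one_sub_X_pow hS, if_neg (by tauto)]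
  · have hSt : partSum B ≤ t := Nat.le_of_dvd (by omega) h2.1
    simp [coeff_X_pow_mul', coeff_inv_one_sub_X_pow hS, hSt, Nat.dvd_sub_self_right, h2.1]
  · have : partSum B ≤ t → ¬ partSum B ∣ t - partSum B := by
      rw [Nat.dvd_sub_self_right]
      intro hSt hdvd
      exact h2 ⟨hdvd.elim id fun h => le_antisymm h hSt ▸ dvd_rfl, Or.inr (by omega)⟩
    simp +contextual [coeff_X_pow_mul', coeff_inv_one_sub_X_pow hS, this]

def weightedSum (a : Fin m → ℕ) (B : Finset (Fin m)) : ℕ := ∑ y ∈ B, ((y : ℕ) + 1) * a y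

theorem weightedSum_of_forall_eq {a : Fin m → ℕ} {B : Finset (Fin m)} {v : ℕ}
    (h : ∀ y ∈ B, a y = v) : weightedSum a B = partSum B * v := by
  rw [weightedSum, partSum, sum_mul]
  exact sum_congr rfl fun y hy => by rw [h y hy]

/-- `a i` is the multiplicity of the part `i + 1`; the bound `a i ≤ n` only makes the set finite. -/
def multiplicityVectors (m n : ℕ) : Finset (Fin m → ℕ) :=
  (Fintype.piFinset fun _ => range (n + 1)).filter (weightedSum · univ = n)

theorem blockCoeff_eq_coeff_poids {a : Fin m → ℕ} {B : Finset (Fin m)} (hB : B.Nonempty)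
    {v : ℕ} (h : ∀ y ∈ B, a y = v) : blockCoeff a B = coeff (weightedSum a B) (poids B) := by
  have hS := partSum_pos hB
  rw [coeff_poids hB, weightedSum_of_forall_eq h, blockCoeff]
  refine if_congr ?_ rfl rfl
  obtain ⟨x, hx⟩ := hB
  constructor
  · rintro (h1 | ⟨v', hv', h'⟩)
    · exact ⟨dvd_mul_right _ _, Or.inl h1⟩
    · exact ⟨dvd_mul_right _ _, Or.inr (mul_ne_zero hS.ne' (h x hx ▸ h' x hx ▸ hv'))⟩
  · rintro ⟨-, h1 | h0⟩
    · exact Or.inl h1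
    · exact Or.inr ⟨v, right_ne_zero_of_mul h0, h⟩

theorem exists_forall_eq_of_blockCoeff_ne_zero {a : Fin m → ℕ} {B : Finset (Fin m)}
    (h : blockCoeff a B ≠ 0) : ∃ v, ∀ y ∈ B, a y = v := by
  obtain ⟨h1 | ⟨v, -, hv⟩, -⟩ := ite_ne_right_iff.1 h
  · obtain ⟨z, rfl⟩ := card_eq_one.1 h1
    exact ⟨a z, by simp⟩
  · exact ⟨v, hv⟩

theorem IsSetPartitionOf.sum_weightedSum {C : Finset (Finset (Fin m))}
    (hC : IsSetPartitionOf univ C) (a : Fin m → ℕ) :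
    ∑ B ∈ C, weightedSum a B = weightedSum a univ :=
  (hC.sum_eq_sum_sum _).symm

noncomputable def blockWeights (C : Finset (Finset (Fin m))) (a : Fin m → ℕ) :
    Finset (Fin m) →₀ ℕ :=
  Finsupp.indicator C fun B _ => weightedSum a B

variable {C : Finset (Finset (Fin m))}

theorem blockWeights_of_mem {B : Finset (Fin m)} (hB : B ∈ C) (a : Fin m → ℕ) :
    blockWeights C a B = weightedSum a B :=
  Finsupp.indicator_of_mem hB _

theorem blockWeights_mem_finsuppAntidiag (hC : IsSetPartitionOf univ C) {n : ℕ}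
    {a : Fin m → ℕ} (ha : a ∈ multiplicityVectors m n) :
    blockWeights C a ∈ finsuppAntidiag C n := by
  rw [mem_finsuppAntidiag]
  refine ⟨?_, Finsupp.support_indicator_subset _ _⟩
  rw [sum_congr rfl fun B hB => blockWeights_of_mem hB a, hC.sum_weightedSum]
  exact (mem_filter.1 ha).2

theorem eq_of_blockWeights_eq (hC : IsSetPartitionOf univ C) {a₁ a₂ : Fin m → ℕ}
    (ha₁ : ∀ B ∈ C, ∃ v, ∀ y ∈ B, a₁ y = v) (ha₂ : ∀ B ∈ C, ∃ v, ∀ y ∈ B, a₂ y = v)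
    (h : blockWeights C a₁ = blockWeights C a₂) : a₁ = a₂ := by
  funext y
  obtain ⟨B, hB, hy⟩ := hC.cover y (mem_univ y)
  obtain ⟨v₁, hv₁⟩ := ha₁ B hB
  obtain ⟨v₂, hv₂⟩ := ha₂ B hB
  have hB₁₂ := DFunLike.congr_fun h B
  rw [blockWeights_of_mem hB, blockWeights_of_mem hB, weightedSum_of_forall_eq hv₁,
    weightedSum_of_forall_eq hv₂] at hB₁₂
  rw [hv₁ y hy, hv₂ y hy]
  exact Nat.eq_of_mul_eq_mul_left (partSum_pos (hC.nonempty B hB)) hB₁₂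

theorem exists_blockWeights_eq (hC : IsSetPartitionOf univ C) {n : ℕ}
    {l : Finset (Fin m) →₀ ℕ} (hl : l ∈ finsuppAntidiag C n)
    (hdvd : ∀ B ∈ C, partSum B ∣ l B) :
    ∃ a ∈ multiplicityVectors m n, (∀ B ∈ C, ∃ v, ∀ y ∈ B, a y = v) ∧ blockWeights C a = l := by
  rw [mem_finsuppAntidiag] at hl
  obtain ⟨a, ha⟩ := hC.exists_forall_mem_eq fun B => l B / partSum B
  have hwa : ∀ B ∈ C, weightedSum a B = l B := fun B hB => by
    rw [weightedSum_of_forall_eq (ha B hB), Nat.mul_div_cancel' (hdvd B hB)]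
  refine ⟨a, ?_, fun B hB => ⟨_, ha B hB⟩, ?_⟩
  · simp only [multiplicityVectors, mem_filter, Fintype.mem_piFinset, mem_range]
    refine ⟨fun y => ?_, ?_⟩
    · obtain ⟨B, hB, hy⟩ := hC.cover y (mem_univ y)
      rw [ha B hB y hy, Nat.lt_succ_iff]
      calc l B / partSum B ≤ l B := Nat.div_le_self _ _
        _ ≤ n := hl.1 ▸ single_le_sum (fun _ _ => Nat.zero_le _) hB
    · rw [← hC.sum_weightedSum, sum_congr rfl hwa]
      exact hl.1
  · ext B
    by_cases hB : B ∈ C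
    · rw [blockWeights_of_mem hB, hwa B hB]
    · rw [blockWeights, Finsupp.indicator_of_notMem hB, eq_comm, ← Finsupp.notMem_support_iff]
      exact fun h => hB (hl.2 h)

theorem coeff_prod_poids (hC : IsSetPartitionOf univ C) (n : ℕ) :
    coeff n (∏ B ∈ C, poids B) = ∑ a ∈ multiplicityVectors m n, ∏ B ∈ C, blockCoeff a B := by
  have hconst : ∀ a, ∏ B ∈ C, blockCoeff a B ≠ 0 → ∀ B ∈ C, ∃ v, ∀ y ∈ B, a y = v :=
    fun a ha B hB => exists_forall_eq_of_blockCoeff_ne_zero ((prod_ne_zero_iff.1 ha) B hB)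
  have hprod : ∀ a, (∀ B ∈ C, ∃ v, ∀ y ∈ B, a y = v) →
      ∏ B ∈ C, blockCoeff a B = ∏ B ∈ C, coeff (blockWeights C a B) (poids B) := fun a ha =>
    prod_congr rfl fun B hB => by
      obtain ⟨_, hv⟩ := ha B hB
      rw [blockWeights_of_mem hB, blockCoeff_eq_coeff_poids (hC.nonempty B hB) hv]
  rw [coeff_prod]
  symm
  refine sum_bij_ne_zero (fun a _ _ => blockWeights C a)
    (fun a ha _ => blockWeights_mem_finsuppAntidiag hC ha)
    (fun a₁ _ ha₁ a₂ _ ha₂ => eq_of_blockWeights_eq hC (hconst a₁ ha₁) (hconst a₂ ha₂))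
    (fun l hl hl0 => ?_) (fun a _ ha => hprod a (hconst a ha))
  have hdvd : ∀ B ∈ C, partSum B ∣ l B := fun B hB => by
    have hB0 := prod_ne_zero_iff.1 hl0 B hB
    rw [coeff_poids (hC.nonempty B hB)] at hB0
    exact (ite_ne_right_iff.1 hB0).1.1
  obtain ⟨a, ha, hconst_a, rfl⟩ := exists_blockWeights_eq hC hl hdvd
  exact ⟨a, ha, hprod a hconst_a ▸ hl0, rfl⟩

end Coefficients

section PartitionMultiplicities

variable {m n : ℕ}

def multiplicities (m : ℕ) (P : n.Partition) (i : Fin m) : ℕ := P.parts.count ((i : ℕ) + 1)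

def partsOfMultiplicities (a : Fin m → ℕ) : Multiset ℕ :=
  ∑ i, Multiset.replicate (a i) ((i : ℕ) + 1)

theorem count_partsOfMultiplicities_succ (a : Fin m → ℕ) (i : Fin m) :
    (partsOfMultiplicities a).count ((i : ℕ) + 1) = a i := by
  rw [partsOfMultiplicities, Multiset.count_sum', sum_eq_single_of_mem i (mem_univ i),
    Multiset.count_replicate_self]
  intro k _ hk
  rw [Multiset.count_replicate, if_neg fun h => hk (Fin.ext (by omega))]

theorem exists_eq_succ_of_mem_partsOfMultiplicities {a : Fin m → ℕ} {j : ℕ}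
    (hj : j ∈ partsOfMultiplicities a) : ∃ i : Fin m, j = i + 1 := by
  obtain ⟨i, -, hi⟩ := Multiset.mem_sum.1 hj
  exact ⟨i, Multiset.eq_of_mem_replicate hi⟩

theorem sum_partsOfMultiplicities (a : Fin m → ℕ) :
    (partsOfMultiplicities a).sum = weightedSum a univ := by
  simp [partsOfMultiplicities, weightedSum, Multiset.sum_sum, mul_comm]

theorem exists_eq_succ_of_mem_parts {P : n.Partition} (hP : ∀ j ∈ P.parts, j ≤ m) {j : ℕ}
    (hj : j ∈ P.parts) : ∃ i : Fin m, j = i + 1 :=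
  ⟨⟨j - 1, by have := hP j hj; have := P.parts_pos hj; omega⟩, by
    have := P.parts_pos hj; simp; omega⟩

theorem partsOfMultiplicities_multiplicities {P : n.Partition} (hP : ∀ j ∈ P.parts, j ≤ m) :
    partsOfMultiplicities (multiplicities m P) = P.parts := by
  ext j
  by_cases hj : ∃ i : Fin m, j = i + 1
  · obtain ⟨i, rfl⟩ := hj
    exact count_partsOfMultiplicities_succ _ i
  · rw [Multiset.count_eq_zero.2 fun h => hj (exists_eq_succ_of_mem_partsOfMultiplicities h),
      Multiset.count_eq_zero.2 fun h => hj (exists_eq_succ_of_mem_parts hP h)]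

theorem multiplicities_mem_multiplicityVectors {P : n.Partition} (hP : ∀ j ∈ P.parts, j ≤ m) :
    multiplicities m P ∈ multiplicityVectors m n := by
  simp only [multiplicityVectors, mem_filter, Fintype.mem_piFinset, mem_range, Nat.lt_succ_iff]
  refine ⟨fun i => ?_, ?_⟩
  · calc P.parts.count ((i : ℕ) + 1) ≤ Multiset.card P.parts := Multiset.count_le_card _ _
      _ ≤ P.parts.sum := by simpa using Multiset.card_nsmul_le_sum fun x hx => P.parts_pos hx
      _ = n := P.parts_sum
  · rw [← sum_partsOfMultiplicities, partsOfMultiplicities_multiplicities hP, P.parts_sum]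

theorem distinctMult_iff_distinctNonzeroOn {P : n.Partition} (hP : ∀ j ∈ P.parts, j ≤ m) :
    distinctMult P ↔ DistinctNonzeroOn (multiplicities m P) univ := by
  simp only [DistinctNonzeroOn, multiplicities]
  constructor
  · intro h y _ z _ hyz hy
    by_cases hz : P.parts.count ((z : ℕ) + 1) = 0
    · rwa [hz]
    · exact h _ (Multiset.count_ne_zero.1 hy) _ (Multiset.count_ne_zero.1 hz)
        fun h => hyz (Fin.ext (by omega))
  · intro h i hi j hj hij
    obtain ⟨y, rfl⟩ := exists_eq_succ_of_mem_parts hP hi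
    obtain ⟨z, rfl⟩ := exists_eq_succ_of_mem_parts hP hj
    exact h y (mem_univ y) z (mem_univ z) (fun h => hij (h ▸ rfl)) (Multiset.count_ne_zero.2 hi)

theorem fm_eq_card_multiplicityVectors (m n : ℕ) :
    fm m n = ((multiplicityVectors m n).filter (DistinctNonzeroOn · univ)).card := by
  rw [fm, Nat.card_eq_fintype_card, Fintype.card_subtype]
  refine card_bij (fun P _ => multiplicities m P) ?_ ?_ ?_
  · intro P hP
    simp only [mem_filter, mem_univ, true_and] at hP ⊢
    exact ⟨multiplicities_mem_multiplicityVectors hP.1,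
      (distinctMult_iff_distinctNonzeroOn hP.1).1 hP.2⟩
  · intro P₁ hP₁ P₂ hP₂ h
    simp only [mem_filter, mem_univ, true_and] at hP₁ hP₂
    rw [Nat.Partition.ext_iff, ← partsOfMultiplicities_multiplicities hP₁.1,
      ← partsOfMultiplicities_multiplicities hP₂.1, h]
  · intro a ha
    simp only [mem_filter, multiplicityVectors] at ha
    have hpos : ∀ j ∈ partsOfMultiplicities a, 0 < j ∧ j ≤ m := fun j hj => by
      obtain ⟨i, rfl⟩ := exists_eq_succ_of_mem_partsOfMultiplicities hj
      omega
    let P : n.Partition := ⟨partsOfMultiplicities a, fun hj => (hpos _ hj).1,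
      (sum_partsOfMultiplicities a).trans ha.1.2⟩
    have hPa : multiplicities m P = a := funext (count_partsOfMultiplicities_succ a)
    have hPm : ∀ j ∈ P.parts, j ≤ m := fun j hj => (hpos j hj).2
    refine ⟨P, ?_, hPa⟩
    simp only [mem_filter, mem_univ, true_and, distinctMult_iff_distinctNonzeroOn hPm, hPa]
    exact ⟨hPm, ha.2⟩

end PartitionMultiplicities

theorem isSetPartition_iff {m : ℕ} {C : Finset (Finset (Fin m))} :
    IsSetPartition m C ↔ IsSetPartitionOf univ C :=
  ⟨fun ⟨h₁, h₂, h₃⟩ => ⟨h₁, fun B _ => subset_univ B, h₂, fun x _ => h₃ x⟩,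
    fun h => ⟨h.nonempty, h.disjoint, fun x => h.cover x (mem_univ x)⟩⟩

theorem gf_fm_eq_sum_set_partitions_general (m : ℕ) :
    (PowerSeries.mk fun n => (fm m n : ℚ)) =
      ∑ C ∈ Finset.univ.filter (fun C : Finset (Finset (Fin m)) => IsSetPartition m C),
        ∏ B ∈ C, poids B := by
  ext n
  simp only [coeff_mk, map_sum, isSetPartition_iff]
  calc (fm m n : ℚ)
      = ∑ a ∈ multiplicityVectors m n, if DistinctNonzeroOn a univ then 1 else 0 := by
        rw [fm_eq_card_multiplicityVectors, sum_boole]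
    _ = ∑ a ∈ multiplicityVectors m n,
          ∑ C ∈ univ.filter (IsSetPartitionOf univ), ∏ B ∈ C, blockCoeff a B := by
        simp only [sum_setPartitions_prod_blockCoeff]
    _ = ∑ C ∈ univ.filter (IsSetPartitionOf univ), coeff n (∏ B ∈ C, poids B) := by
        rw [sum_comm]
        exact sum_congr rfl fun C hC => (coeff_prod_poids (mem_filter.1 hC).2 n).symm

/-- `∑_{n ≥ 0} f_m(n) q^n = ∑_{set partitions C of {1,…,m}} ∏_{B ∈ C} poids(B)`. -/
theorem gf_fm_eq_sum_set_partitions (m : ℕ) (hm : 1 ≤ m) :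
    (PowerSeries.mk fun n => (fm m n : ℚ)) =
      ∑ C ∈ Finset.univ.filter (fun C : Finset (Finset (Fin m)) => IsSetPartition m C),
        ∏ B ∈ C, poids B :=
  gf_fm_eq_sum_set_partitions_general m
end

section
/- The generating function sum over n ≥ 0 of f_m(n) q^n is a rational function of q whose poles are all roots of unity, and the pole at q = 1 has order exactly m, while all other poles have order strictly less than m. -/
/-!
Group the partitions by their set `S` of distinct parts and let `H_S` be the generating function
of those with distinct multiplicities. Removing one copy of every part is a bijection onto the
partitions with parts in `S` whose multiplicities are distinct on all of `S` (so at most one of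
them is `0`), whence `H_S (1 - q^σ) = q^σ ∑_{a ∈ S} H_{S ∖ {a}}` with `σ = ∑ S`. Unfolding, `H_S`
is a sum over the orderings of `S` of products of `q^s / (1 - q^s)` over the prefix sums `s`, and
`1 - q^s = (1 - q) ∏_{1 < d ∣ s} Φ_d(q)`. So `q = 1` is a pole of order at most `|S| ≤ m`, and a
primitive `d`-th root of unity, `d ≥ 2`, one of order at most the number of prefix sums divisible
by `d`, which is `< m`. The numerators produced by the recursion are positive at `q = 1`, and over
the common denominator `(1 - q)^m ∏_{d=2}^{N} Φ_d^{m-1}`, `N = ∑_{i ≤ m} i`, only `S = {1, …, m}`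
keeps a nonzero value at `1`, so the pole at `1` has order exactly `m`.
-/

open Polynomial Finset

section CyclotomicProd

variable (R : Type*) [CommRing R]

noncomputable def cyclotomicProd (N : ℕ) (e : ℕ → ℕ) : R[X] :=
  ∏ d ∈ Icc 2 N, cyclotomic d R ^ e d

variable {R}

lemma cyclotomicProd_mul_eq {N : ℕ} {e e' e'' : ℕ → ℕ}
    (h : ∀ d ∈ Icc 2 N, e d + e' d = e'' d) :
    cyclotomicProd R N e * cyclotomicProd R N e' = cyclotomicProd R N e'' := by
  simp only [cyclotomicProd, ← prod_mul_distrib, ← pow_add]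
  exact prod_congr rfl fun d hd => by rw [h d hd]

lemma cyclotomicProd_const_eq_pow (N k : ℕ) :
    cyclotomicProd R N (fun _ => k) = cyclotomicProd R N (fun _ => 1) ^ k := by
  simp only [cyclotomicProd, pow_one, prod_pow]

lemma map_cyclotomicProd {S : Type*} [CommRing S] (f : R →+* S) (N : ℕ) (e : ℕ → ℕ) :
    (cyclotomicProd R N e).map f = cyclotomicProd S N e := by
  simp only [cyclotomicProd, Polynomial.map_prod, Polynomial.map_pow, map_cyclotomic]

lemma cyclotomicProd_const_one_dvd (N : ℕ) :
    cyclotomicProd R N (fun _ => 1) ∣ X ^ N.factorial - 1 := by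
  rw [← prod_cyclotomic_eq_X_pow_sub_one N.factorial_pos]
  simp only [cyclotomicProd, pow_one]
  refine prod_dvd_prod_of_subset _ _ _ fun d hd => ?_
  obtain ⟨h2, hN⟩ := mem_Icc.mp hd
  exact Nat.mem_divisors.mpr ⟨Nat.dvd_factorial (by omega) hN, N.factorial_ne_zero⟩

lemma one_sub_X_pow_eq_mul_cyclotomicProd {s N : ℕ} (hs : 0 < s) (hsN : s ≤ N) :
    (1 - X ^ s : R[X]) = (1 - X) * cyclotomicProd R N (fun d => if d ∣ s then 1 else 0) := by
  have hdiv : (Icc 2 N).filter (· ∣ s) = s.divisors.erase 1 := by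
    ext d
    simp only [mem_filter, mem_Icc, mem_erase, Nat.mem_divisors]
    constructor
    · rintro ⟨⟨h2, -⟩, hd⟩
      exact ⟨by omega, hd, hs.ne'⟩
    · rintro ⟨h1, hd, -⟩
      have := Nat.le_of_dvd hs hd
      have := Nat.pos_of_dvd_of_pos hd hs
      exact ⟨⟨by omega, by omega⟩, hd⟩
  have hX : (X ^ s - 1 : R[X]) = (X - 1) * ∏ d ∈ s.divisors.erase 1, cyclotomic d R := by
    rw [← prod_cyclotomic_eq_X_pow_sub_one hs, ← cyclotomic_one,
      mul_prod_erase _ (fun d => cyclotomic d R) (Nat.one_mem_divisors.mpr hs.ne')]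
  simp only [cyclotomicProd, pow_ite, pow_one, pow_zero, ← prod_filter, hdiv]
  linear_combination -hX

end CyclotomicProd

lemma eval_one_cyclotomicProd_pos (N : ℕ) (e : ℕ → ℕ) : 0 < (cyclotomicProd ℚ N e).eval 1 := by
  rw [cyclotomicProd, eval_prod]
  refine prod_pos fun d hd => ?_
  rw [eval_pow]
  refine pow_pos ?_ _
  obtain h2 | h2 := (mem_Icc.mp hd).1.eq_or_lt
  · simp [← h2, cyclotomic_two]
  · exact cyclotomic_pos h2 1

lemma cyclotomicProd_ne_zero (N : ℕ) (e : ℕ → ℕ) : cyclotomicProd ℚ N e ≠ 0 := fun h => by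
  simpa [h] using eval_one_cyclotomicProd_pos N e

lemma rootMultiplicity_cyclotomicProd_const_le (N k : ℕ) (z : ℂ) :
    (cyclotomicProd ℂ N (fun _ => k)).rootMultiplicity z ≤ k := by
  classical
  have hsep : (cyclotomicProd ℂ N (fun _ => 1)).Separable :=
    (X_pow_sub_one_separable_iff.mpr (by exact_mod_cast N.factorial_ne_zero)).of_dvd
      (cyclotomicProd_const_one_dvd N)
  rw [cyclotomicProd_const_eq_pow, ← count_roots, roots_pow, Multiset.count_nsmul, count_roots]
  simpa using Nat.mul_le_mul_left k (rootMultiplicity_le_one_of_separable hsep z)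

lemma pos_and_pow_factorial_eq_one_of_isRoot {N k : ℕ} {z : ℂ}
    (hz : (cyclotomicProd ℂ N (fun _ => k)).IsRoot z) : 0 < k ∧ z ^ N.factorial = 1 := by
  rw [cyclotomicProd_const_eq_pow, IsRoot, eval_pow, pow_eq_zero_iff'] at hz
  obtain ⟨q, hq⟩ := cyclotomicProd_const_one_dvd (R := ℂ) N
  exact ⟨Nat.pos_of_ne_zero hz.2, by simpa [sub_eq_zero, hz.1] using congrArg (eval z) hq⟩

lemma PowerSeries.one_sub_X_pow_ne_zero {R : Type*} [CommRing R] [Nontrivial R] {s : ℕ}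
    (hs : s ≠ 0) : (1 - PowerSeries.X ^ s : PowerSeries R) ≠ 0 := fun h => by
  have := congrArg PowerSeries.constantCoeff h
  rw [map_sub, map_one, map_pow, PowerSeries.constantCoeff_X, zero_pow hs, sub_zero,
    map_zero] at this
  exact one_ne_zero this

namespace Multiset

variable {α : Type*} [DecidableEq α] {μ : Multiset α} {S : Finset α}

lemma count_add_finset_val {a : α} (ha : a ∈ S) : (μ + S.val).count a = μ.count a + 1 := by
  rw [count_add, count_eq_one_of_mem S.nodup ha]

lemma injOn_count_add_finset_val_iff :
    Set.InjOn (μ + S.val).count S ↔ Set.InjOn μ.count S := by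
  refine forall₂_congr fun a ha => forall₂_congr fun b hb => ?_
  dsimp only
  rw [count_add_finset_val ha, count_add_finset_val hb, add_left_inj]

lemma toFinset_eq_or_eq_erase_of_injOn_count (hsub : μ.toFinset ⊆ S)
    (hinj : Set.InjOn μ.count S) : μ.toFinset = S ∨ ∃ a ∈ S, μ.toFinset = S.erase a := by
  by_contra! h
  obtain ⟨a, haS, haμ⟩ := exists_of_ssubset (hsub.ssubset_of_ne h.1)
  refine h.2 a haS (subset_antisymm (fun b hb => mem_erase.mpr ⟨?_, hsub hb⟩) fun b hb => ?_)
  · rintro rfl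
    exact haμ hb
  · obtain ⟨hba, hbS⟩ := mem_erase.mp hb
    by_contra hbμ
    refine hba (hinj hbS haS ?_)
    simp only [count_eq_zero.mpr (mt mem_toFinset.mpr hbμ),
      count_eq_zero.mpr (mt mem_toFinset.mpr haμ)]

lemma injOn_count_iff_of_toFinset_eq_erase {a : α} (h : μ.toFinset = S.erase a) :
    Set.InjOn μ.count S ↔ Set.InjOn μ.count (S.erase a) := by
  refine ⟨fun hinj => hinj.mono (by simp), fun hinj b hb c hc hbc => ?_⟩
  have hpos : ∀ x ∈ S, x ≠ a → μ.count x ≠ 0 := fun x hx hxa => by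
    simpa [← mem_toFinset, h] using And.intro hxa hx
  have ha : μ.count a = 0 := count_eq_zero.mpr (by simp [← mem_toFinset, h])
  by_cases hba : b = a <;> by_cases hca : c = a
  · rw [hba, hca]
  · subst hba
    exact absurd (hbc.symm.trans ha) (hpos c hc hca)
  · subst hca
    exact absurd (hbc.trans ha) (hpos b hb hba)
  · exact hinj (mem_erase.mpr ⟨hba, hb⟩) (mem_erase.mpr ⟨hca, hc⟩) hbc

end Multiset

namespace Nat.Partition

lemma distinctMult_iff_injOn {n : ℕ} (P : n.Partition) :
    distinctMult P ↔ Set.InjOn P.parts.count P.parts.toFinset := by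
  simp only [distinctMult, Set.InjOn, mem_coe, Multiset.mem_toFinset]
  exact forall₂_congr fun a _ => forall₂_congr fun b _ => not_imp_not

lemma val_le_parts_of_toFinset_eq {n : ℕ} {P : n.Partition} {S : Finset ℕ}
    (h : P.parts.toFinset = S) : S.val ≤ P.parts := by
  subst h
  rw [Multiset.toFinset_val]
  exact Multiset.dedup_le _

def peelEquiv (n : ℕ) {S : Finset ℕ} (h0 : 0 ∉ S) :
    {P : (n + S.sum id).Partition // P.parts.toFinset = S ∧ Set.InjOn P.parts.count S} ≃
      {Q : n.Partition // Q.parts.toFinset ⊆ S ∧ Set.InjOn Q.parts.count S} where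
  toFun P :=
    have hadd : P.1.parts - S.val + S.val = P.1.parts :=
      tsub_add_cancel_of_le (val_le_parts_of_toFinset_eq P.2.1)
    ⟨⟨P.1.parts - S.val, fun hi => P.1.parts_pos (Multiset.mem_of_le tsub_le_self hi), by
        have := congrArg Multiset.sum hadd
        rw [Multiset.sum_add, P.1.parts_sum, sum_val] at this
        omega⟩,
      P.2.1 ▸ Multiset.toFinset_subset.mpr (Multiset.subset_of_le tsub_le_self),
      Multiset.injOn_count_add_finset_val_iff.mp (hadd ▸ P.2.2)⟩
  invFun Q :=
    ⟨⟨Q.1.parts + S.val, fun hi => by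
        rcases Multiset.mem_add.mp hi with hi | hi
        · exact Q.1.parts_pos hi
        · exact Nat.pos_of_ne_zero fun h => h0 (h ▸ hi),
        by rw [Multiset.sum_add, Q.1.parts_sum, sum_val]⟩,
      by rw [Multiset.toFinset_add, val_toFinset, union_eq_right.mpr Q.2.1],
      Multiset.injOn_count_add_finset_val_iff.mpr Q.2.2⟩
  left_inv P := Subtype.ext <| Nat.Partition.ext <|
    tsub_add_cancel_of_le (val_le_parts_of_toFinset_eq P.2.1)
  right_inv Q := Subtype.ext <| Nat.Partition.ext <| add_tsub_cancel_right _ _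

end Nat.Partition

open Nat.Partition

noncomputable def distinctMultCount (S : Finset ℕ) (n : ℕ) : ℕ :=
  Nat.card {P : n.Partition // P.parts.toFinset = S ∧ distinctMult P}

lemma distinctMultCount_eq_zero_of_lt {S : Finset ℕ} {n : ℕ} (h : n < S.sum id) :
    distinctMultCount S n = 0 := by
  refine Nat.card_eq_zero.mpr (.inl ⟨fun ⟨P, hP, _⟩ => h.not_ge ?_⟩)
  obtain ⟨ν, hν⟩ := Multiset.le_iff_exists_add.mp (val_le_parts_of_toFinset_eq hP)
  have := congrArg Multiset.sum hν
  rw [Multiset.sum_add, P.parts_sum, sum_val] at this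
  omega

lemma distinctMultCount_empty (n : ℕ) : distinctMultCount ∅ n = if n = 0 then 1 else 0 := by
  split_ifs with hn
  · subst hn
    refine Nat.card_eq_one_iff_unique.mpr ⟨inferInstance, ⟨⟨default, ?_, ?_⟩⟩⟩ <;>
      simp [distinctMult]
  · refine Nat.card_eq_zero.mpr (.inl ⟨fun ⟨P, hP, _⟩ => hn ?_⟩)
    rw [← P.parts_sum, Multiset.toFinset_eq_empty.mp hP, Multiset.sum_zero]

lemma card_toFinset_subset_injOn_count (S : Finset ℕ) (n : ℕ) :
    Nat.card {Q : n.Partition // Q.parts.toFinset ⊆ S ∧ Set.InjOn Q.parts.count S} =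
      distinctMultCount S n + ∑ a ∈ S, distinctMultCount (S.erase a) n := by
  classical
  simp only [distinctMultCount, Nat.card_eq_fintype_card, Fintype.card_subtype]
  rw [card_eq_sum_card_fiberwise (f := fun Q : n.Partition => Q.parts.toFinset)
    (t := insert S (S.image S.erase)), sum_insert, sum_image S.erase_injOn]
  · simp only [filter_filter, distinctMult_iff_injOn]
    congr 1
    · refine congrArg card (filter_congr fun Q _ => ?_)
      exact ⟨fun h => ⟨h.2, h.2 ▸ h.1.2⟩, fun h => ⟨⟨h.1.subset, h.1 ▸ h.2⟩, h.1⟩⟩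
    · refine sum_congr rfl fun a _ => congrArg card (filter_congr fun Q _ => ?_)
      refine ⟨fun h => ⟨h.2, ?_⟩, fun h => ⟨⟨h.1 ▸ erase_subset a S, ?_⟩, h.1⟩⟩
      · exact h.2 ▸ (Multiset.injOn_count_iff_of_toFinset_eq_erase h.2).mp h.1.2
      · exact (Multiset.injOn_count_iff_of_toFinset_eq_erase h.1).mpr (h.1 ▸ h.2)
  · simp only [mem_image, not_exists, not_and]
    exact fun a ha => (erase_ssubset ha).ne
  · intro Q hQ
    rw [mem_coe, mem_filter] at hQ
    simpa [mem_insert, mem_image, eq_comm] using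
      Multiset.toFinset_eq_or_eq_erase_of_injOn_count hQ.2.1 hQ.2.2

lemma distinctMultCount_add_sum {S : Finset ℕ} (h0 : 0 ∉ S) (n : ℕ) :
    distinctMultCount S (n + S.sum id) =
      distinctMultCount S n + ∑ a ∈ S, distinctMultCount (S.erase a) n := by
  rw [← card_toFinset_subset_injOn_count, ← Nat.card_congr (peelEquiv n h0), distinctMultCount]
  refine Nat.card_congr (Equiv.subtypeEquivRight fun P => ?_)
  rw [distinctMult_iff_injOn]
  exact and_congr_right fun h => by rw [h]

lemma fm_eq_sum_distinctMultCount (m n : ℕ) :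
    fm m n = ∑ S ∈ (Icc 1 m).powerset, distinctMultCount S n := by
  classical
  simp only [fm, distinctMultCount, Nat.card_eq_fintype_card, Fintype.card_subtype]
  rw [card_eq_sum_card_fiberwise (f := fun P : n.Partition => P.parts.toFinset)]
  · refine sum_congr rfl fun S hS => ?_
    rw [filter_filter]
    refine congrArg card (filter_congr fun P _ => ?_)
    refine ⟨fun h => ⟨h.2, h.1.2⟩, fun h => ⟨⟨fun x hx => ?_, h.2⟩, h.1⟩⟩
    exact (mem_Icc.mp (mem_powerset.mp hS (h.1 ▸ Multiset.mem_toFinset.mpr hx))).2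
  · intro P hP
    rw [mem_coe, mem_filter] at hP
    rw [mem_coe, mem_powerset]
    intro x hx
    rw [Multiset.mem_toFinset] at hx
    exact mem_Icc.mpr ⟨P.parts_pos hx, hP.2.1 x hx⟩

noncomputable def distinctMultSeries (S : Finset ℕ) : PowerSeries ℚ :=
  PowerSeries.mk fun n => (distinctMultCount S n : ℚ)

lemma distinctMultSeries_empty : distinctMultSeries ∅ = 1 := by
  ext n
  simp [distinctMultSeries, distinctMultCount_empty, PowerSeries.coeff_one]

lemma distinctMultSeries_mul_one_sub_X_pow {S : Finset ℕ} (h0 : 0 ∉ S) :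
    distinctMultSeries S * (1 - PowerSeries.X ^ S.sum id) =
      PowerSeries.X ^ S.sum id * ∑ a ∈ S, distinctMultSeries (S.erase a) := by
  ext n
  rw [mul_sub, mul_one, map_sub, PowerSeries.coeff_mul_X_pow', PowerSeries.coeff_X_pow_mul']
  simp only [distinctMultSeries, map_sum, PowerSeries.coeff_mk]
  split_ifs with h
  · obtain ⟨k, rfl⟩ := Nat.exists_eq_add_of_le' h
    rw [Nat.add_sub_cancel, distinctMultCount_add_sum h0]
    push_cast
    ring
  · simp [distinctMultCount_eq_zero_of_lt (not_le.mp h)]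

lemma mk_fm_eq_sum_distinctMultSeries (m : ℕ) :
    (PowerSeries.mk fun n => (fm m n : ℚ)) = ∑ S ∈ (Icc 1 m).powerset, distinctMultSeries S := by
  ext n
  simp [distinctMultSeries, fm_eq_sum_distinctMultCount]

/-- For `d ≥ 2`, this bounds the number of prefix sums divisible by `d` along any ordering of `S`:
if `1 ∈ S`, the prefix sums just before and just after `1` is added cannot both be. -/
def poleBound (S : Finset ℕ) (d : ℕ) : ℕ :=
  if d ∣ S.sum id ∧ 1 ∉ S then S.card else S.card - 1

lemma poleBound_le_card (S : Finset ℕ) (d : ℕ) : poleBound S d ≤ S.card := by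
  unfold poleBound
  split_ifs <;> omega

lemma poleBound_erase_add_le {S : Finset ℕ} {a d : ℕ} (ha : a ∈ S) (hd : 2 ≤ d) :
    poleBound (S.erase a) d + (if d ∣ S.sum id then 1 else 0) ≤ poleBound S d := by
  have hcard := card_erase_add_one ha
  have hle := poleBound_le_card (S.erase a) d
  by_cases hdS : d ∣ S.sum id
  · rw [if_pos hdS]
    by_cases h1 : 1 ∈ S
    · have hS : poleBound S d = S.card - 1 := if_neg fun h => h.2 h1
      suffices poleBound (S.erase a) d = (S.erase a).card - 1 ∧ 0 < (S.erase a).card by omega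
      obtain rfl | ha1 := eq_or_ne a 1
      · have hsum : (S.erase 1).sum id + 1 = S.sum id := sum_erase_add S id h1
        have hndvd : ¬ d ∣ (S.erase 1).sum id := fun h => by
          have := Nat.le_of_dvd one_pos ((Nat.dvd_add_right h).mp (hsum ▸ hdS))
          omega
        exact ⟨if_neg fun h => hndvd h.1,
          card_pos.mpr (nonempty_iff_ne_empty.mpr fun h => hndvd (by simp [h]))⟩
      · have h1' : 1 ∈ S.erase a := mem_erase.mpr ⟨ha1.symm, h1⟩
        exact ⟨if_neg fun h => h.2 h1', card_pos.mpr ⟨1, h1'⟩⟩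
    · have hS : poleBound S d = S.card := if_pos ⟨hdS, h1⟩
      omega
  · have hS : S.card - 1 ≤ poleBound S d := by
      unfold poleBound
      split_ifs <;> omega
    rw [if_neg hdS]
    omega

lemma poleBound_le_of_subset_Icc {S : Finset ℕ} {m : ℕ} (hS : S ⊆ Icc 1 m) (d : ℕ) :
    poleBound S d ≤ m - 1 := by
  have hcard : S.card ≤ m := by simpa using card_le_card hS
  have hle := poleBound_le_card S d
  obtain hlt | heq := hcard.lt_or_eq
  · omega
  · have hS' : S = Icc 1 m := eq_of_subset_of_card_le hS (by simp [heq])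
    obtain rfl | hm := Nat.eq_zero_or_pos m
    · omega
    · have h1 : 1 ∈ S := by
        rw [hS', mem_Icc]
        omega
      have : poleBound S d = S.card - 1 := if_neg fun h => h.2 h1
      omega

lemma sum_id_pos_of_mem {S : Finset ℕ} {a : ℕ} (ha : a ∈ S) (h0 : 0 ∉ S) : 0 < S.sum id :=
  (Nat.pos_of_ne_zero fun h => h0 (h ▸ ha)).trans_le
    (single_le_sum (f := id) (fun _ _ => Nat.zero_le _) ha)

noncomputable def poleDenom (N : ℕ) (S : Finset ℕ) : ℚ[X] :=
  (1 - X) ^ S.card * cyclotomicProd ℚ N (poleBound S)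

lemma exists_poleDenom_eq_erase_mul {N : ℕ} {S : Finset ℕ} {a : ℕ} (ha : a ∈ S) (h0 : 0 ∉ S)
    (hN : S.sum id ≤ N) : ∃ R : ℚ[X], 0 < R.eval 1 ∧
      poleDenom N S = poleDenom N (S.erase a) * (1 - X ^ S.sum id) * R := by
  let e d := poleBound S d - (poleBound (S.erase a) d + if d ∣ S.sum id then 1 else 0)
  refine ⟨cyclotomicProd ℚ N e, eval_one_cyclotomicProd_pos N e, ?_⟩
  have hC : cyclotomicProd ℚ N (poleBound (S.erase a)) *
      cyclotomicProd ℚ N (fun d => if d ∣ S.sum id then 1 else 0) * cyclotomicProd ℚ N e =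
      cyclotomicProd ℚ N (poleBound S) := by
    rw [cyclotomicProd_mul_eq (fun _ _ => rfl), cyclotomicProd_mul_eq]
    intro d hd
    have := poleBound_erase_add_le (d := d) ha (mem_Icc.mp hd).1
    dsimp only [e]
    omega
  rw [poleDenom, poleDenom, ← card_erase_add_one ha,
    one_sub_X_pow_eq_mul_cyclotomicProd (sum_id_pos_of_mem ha h0) hN, ← hC]
  ring

lemma exists_distinctMultSeries_mul_poleDenom (N : ℕ) (S : Finset ℕ) (h0 : 0 ∉ S)
    (hN : S.sum id ≤ N) :
    ∃ P : ℚ[X], 0 < P.eval 1 ∧ distinctMultSeries S * (poleDenom N S : PowerSeries ℚ) = P := by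
  induction S using Finset.strongInduction with
  | H S ih =>
    obtain rfl | ⟨a₀, ha₀⟩ := S.eq_empty_or_nonempty
    · exact ⟨1, by simp, by simp [distinctMultSeries_empty, poleDenom, poleBound, cyclotomicProd]⟩
    have hstep : ∀ a ∈ S, ∃ Q : ℚ[X], 0 < Q.eval 1 ∧
        distinctMultSeries (S.erase a) * (poleDenom N S : PowerSeries ℚ) =
          (Q : PowerSeries ℚ) * (1 - PowerSeries.X ^ S.sum id) := fun a ha => by
      obtain ⟨P, hP1, hP⟩ := ih _ (erase_ssubset ha) (fun h => h0 (mem_of_mem_erase h))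
        ((sum_le_sum_of_subset (erase_subset a S)).trans hN)
      obtain ⟨R, hR1, hR⟩ := exists_poleDenom_eq_erase_mul ha h0 hN
      refine ⟨P * R, by simpa using mul_pos hP1 hR1, ?_⟩
      rw [hR]
      push_cast
      rw [← hP]
      ring
    choose! Q hQ using hstep
    refine ⟨X ^ S.sum id * ∑ a ∈ S, Q a, ?_, ?_⟩
    · simp only [eval_mul, eval_pow, eval_X, one_pow, one_mul, eval_finsetSum]
      exact sum_pos (fun a ha => (hQ a ha).1) ⟨a₀, ha₀⟩
    · refine mul_right_cancel₀ (PowerSeries.one_sub_X_pow_ne_zero (sum_id_pos_of_mem ha₀ h0).ne') ?_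
      rw [mul_right_comm, distinctMultSeries_mul_one_sub_X_pow h0, mul_assoc, sum_mul,
        sum_congr rfl fun a ha => (hQ a ha).2, ← sum_mul, ← coeToPowerSeries.ringHom_apply,
        map_mul, map_sum]
      simp only [map_pow, coeToPowerSeries.ringHom_apply, coe_X, mul_assoc]

noncomputable def poleCofactor (m N : ℕ) (S : Finset ℕ) : ℚ[X] :=
  (1 - X) ^ (m - S.card) * cyclotomicProd ℚ N (fun d => m - 1 - poleBound S d)

lemma poleDenom_mul_poleCofactor {m N : ℕ} {S : Finset ℕ} (hS : S ⊆ Icc 1 m) :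
    poleDenom N S * poleCofactor m N S = (1 - X) ^ m * cyclotomicProd ℚ N (fun _ => m - 1) := by
  have hcard : S.card ≤ m := by simpa using card_le_card hS
  rw [poleDenom, poleCofactor, mul_mul_mul_comm, ← pow_add, Nat.add_sub_cancel' hcard,
    cyclotomicProd_mul_eq fun d _ => Nat.add_sub_cancel' (poleBound_le_of_subset_Icc hS d)]

lemma eval_one_poleCofactor_nonneg (m N : ℕ) (S : Finset ℕ) :
    0 ≤ (poleCofactor m N S).eval 1 := by
  rw [poleCofactor, eval_mul, eval_pow, eval_sub, eval_one, eval_X, sub_self]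
  exact mul_nonneg (pow_nonneg le_rfl _) (eval_one_cyclotomicProd_pos _ _).le

lemma eval_one_poleCofactor_Icc_pos (m N : ℕ) : 0 < (poleCofactor m N (Icc 1 m)).eval 1 := by
  rw [poleCofactor, Nat.card_Icc, Nat.add_sub_cancel, Nat.sub_self, pow_zero, one_mul]
  exact eval_one_cyclotomicProd_pos _ _

lemma exists_mk_fm_mul_eq (m : ℕ) :
    ∃ P : ℚ[X], 0 < P.eval 1 ∧ (PowerSeries.mk fun n => (fm m n : ℚ)) *
      (((1 - X) ^ m * cyclotomicProd ℚ ((Icc 1 m).sum id) (fun _ => m - 1) : ℚ[X]) :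
        PowerSeries ℚ) = P := by
  set N := (Icc 1 m).sum id
  have hS : ∀ S ∈ (Icc 1 m).powerset, ∃ P : ℚ[X], 0 < P.eval 1 ∧
      distinctMultSeries S * (poleDenom N S : PowerSeries ℚ) = P := fun S hS =>
    exists_distinctMultSeries_mul_poleDenom N S (fun h => by simpa using mem_powerset.mp hS h)
      (sum_le_sum_of_subset (mem_powerset.mp hS))
  choose! P hP using hS
  refine ⟨∑ S ∈ (Icc 1 m).powerset, P S * poleCofactor m N S, ?_, ?_⟩
  · rw [eval_finsetSum]
    refine sum_pos' (fun S hS => ?_) ⟨Icc 1 m, mem_powerset_self _, ?_⟩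
    · rw [eval_mul]
      exact mul_nonneg (hP S hS).1.le (eval_one_poleCofactor_nonneg m N S)
    · rw [eval_mul]
      exact mul_pos (hP _ (mem_powerset_self _)).1 (eval_one_poleCofactor_Icc_pos m N)
  · rw [mk_fm_eq_sum_distinctMultSeries, sum_mul,
      ← coeToPowerSeries.ringHom_apply (φ := ∑ S ∈ _, P S * poleCofactor m N S), map_sum]
    refine sum_congr rfl fun S hS => ?_
    rw [← poleDenom_mul_poleCofactor (mem_powerset.mp hS), map_mul,
      coeToPowerSeries.ringHom_apply, coeToPowerSeries.ringHom_apply, Polynomial.coe_mul,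
      ← mul_assoc, (hP S hS).2]

theorem gf_fm_rational_poles_general (m : ℕ) :
    ∃ P Q : Polynomial ℚ,
      Q ≠ 0 ∧
      (PowerSeries.mk fun n => (fm m n : ℚ)) * (((1 - Polynomial.X) ^ m * Q : Polynomial ℚ) :
          PowerSeries ℚ) = (P : PowerSeries ℚ) ∧
      P.eval 1 ≠ 0 ∧ Q.eval 1 ≠ 0 ∧
      ∀ z : ℂ, (Q.map (algebraMap ℚ ℂ)).IsRoot z →
        (∃ k : ℕ, 0 < k ∧ z ^ k = 1) ∧
          (Q.map (algebraMap ℚ ℂ)).rootMultiplicity z < m := by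
  obtain ⟨P, hP1, hP⟩ := exists_mk_fm_mul_eq m
  refine ⟨P, _, cyclotomicProd_ne_zero _ _, hP, hP1.ne', (eval_one_cyclotomicProd_pos _ _).ne',
    fun z hz => ?_⟩
  rw [map_cyclotomicProd] at hz ⊢
  obtain ⟨hm, hz1⟩ := pos_and_pow_factorial_eq_one_of_isRoot hz
  have := rootMultiplicity_cyclotomicProd_const_le ((Icc 1 m).sum id) (m - 1) z
  exact ⟨⟨_, Nat.factorial_pos _, hz1⟩, by omega⟩

/-- `∑_{n≥0} f_m(n) qⁿ` is a rational function `P(q)/((1-q)^m Q(q))` whose poles are all roots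
of unity; the pole at `q = 1` has order exactly `m` (`P(1) ≠ 0`, `Q(1) ≠ 0`), and every other
pole (a root `z` of `Q`) is a root of unity of multiplicity strictly less than `m`. -/
theorem gf_fm_rational_poles (m : ℕ) (hm : 1 ≤ m) :
    ∃ P Q : Polynomial ℚ,
      Q ≠ 0 ∧
      (PowerSeries.mk fun n => (fm m n : ℚ)) * (((1 - Polynomial.X) ^ m * Q : Polynomial ℚ) :
          PowerSeries ℚ) = (P : PowerSeries ℚ) ∧
      P.eval 1 ≠ 0 ∧ Q.eval 1 ≠ 0 ∧
      ∀ z : ℂ, (Q.map (algebraMap ℚ ℂ)).IsRoot z →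
        (∃ k : ℕ, 0 < k ∧ z ^ k = 1) ∧
          (Q.map (algebraMap ℚ ℂ)).rootMultiplicity z < m :=
  gf_fm_rational_poles_general m
end
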